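/- arXiv:2402.08628 — 2 statements merged into one kernel-verified Lean document; each statement's English description precedes it below -/
import Mathlib

section
/- Let X_1, …, X_N be independent ℝ^d-valued random variables with laws μ_1, …, μ_N, let ξ_1, …, ξ_N ∈ [0,1] with N_w := Σ_{j=1}^N ξ_j > 0, and set ν := N_w^{-1} Σ_j ξ_j δ_{X_j} and μ̄ := N_w^{-1} Σ_j ξ_j μ_j. Then for all integers n ≥ 0 and l ≥ 0: Σ_{F ∈ P_l} E[ |ν(2ⁿF ∩ B_n) − μ̄(2ⁿF ∩ B_n)| ] ≤ min{ 2 μ̄(B_n) , 2^{dl/2} ( μ̄(B_n)/N_w )^{1/2} }. -/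
open MeasureTheory ENNReal Set Filter ProbabilityTheory

noncomputable section

/-- The state space `ℝ^d`. -/
abbrev Ed (d : ℕ) : Type := EuclideanSpace ℝ (Fin d)

/-- The weighted empirical measure `N_w⁻¹ ∑_j ξ_j δ_{x_j}` with `N_w = ∑_j ξ_j`. -/
def wEmp {d N : ℕ} (ξ : Fin N → ℝ) (x : Fin N → Ed d) : Measure (Ed d) :=
  (ENNReal.ofReal (∑ j, ξ j))⁻¹ • ∑ j, ENNReal.ofReal (ξ j) • Measure.dirac (x j)

/-- The weighted mixture `N_w⁻¹ ∑_j ξ_j μ_j` of the laws, with `N_w = ∑_j ξ_j`. -/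
def wMix {d N : ℕ} (ξ : Fin N → ℝ) (μ : Fin N → Measure (Ed d)) : Measure (Ed d) :=
  (ENNReal.ofReal (∑ j, ξ j))⁻¹ • ∑ j, ENNReal.ofReal (ξ j) • μ j

/-- The box `(-a, a]^d ⊆ ℝ^d`. -/
def box (d : ℕ) (a : ℝ) : Set (Ed d) := {x | ∀ i, x i ∈ Set.Ioc (-a) a}

/-- The dyadic annuli: `B_0 = (-1,1]^d` and `B_n = (-2ⁿ,2ⁿ]^d \ (-2^{n-1},2^{n-1}]^d`. -/
def Bset (d : ℕ) (n : ℕ) : Set (Ed d) :=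
  if n = 0 then box d 1 else box d (2 ^ n) \ box d (2 ^ (n - 1))

/-- The cell of index `k` in the natural partition `P_l` of `(-1,1]^d` into `2^{dl}`
translates of `(-2^{-l},2^{-l}]^d` (cubes of side `2^{1-l}`). -/
def cell (d l : ℕ) (k : Fin d → Fin (2 ^ l)) : Set (Ed d) :=
  {x | ∀ i, x i ∈
    Set.Ioc (-1 + (k i : ℝ) * 2 ^ (1 - (l : ℤ))) (-1 + ((k i : ℝ) + 1) * 2 ^ (1 - (l : ℤ)))}

/-!
For a measurable set `A`, `ν(A) = N_w⁻¹ ∑_j ξ_j 1_A(X_j)` has mean `μ̄(A)` and, by independence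
and `ξ_j ≤ 1`, variance `N_w⁻² ∑_j ξ_j² Var 1_A(X_j) ≤ μ̄(A) / N_w`. Hence `E|ν(A) − μ̄(A)|` is at
most `2 μ̄(A)` (both terms are nonnegative) and at most `√(μ̄(A) / N_w)` (Cauchy–Schwarz). The sets
`2ⁿF ∩ B_n`, `F ∈ P_l`, are disjoint subsets of `B_n`; summing the first bound over them gives
`2 μ̄(B_n)`, and summing the second with Cauchy–Schwarz over the `2^{dl}` cells gives
`2^{dl/2} √(μ̄(B_n) / N_w)`.
-/

lemma measurableSet_setOf_forall_coord_mem {d : ℕ} {s : Fin d → Set ℝ}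
    (hs : ∀ i, MeasurableSet (s i)) : MeasurableSet {x : Ed d | ∀ i, x i ∈ s i} := by
  rw [Set.ofPred_forall]
  exact MeasurableSet.iInter fun i =>
    (hs i).preimage ((measurable_pi_apply i).comp (WithLp.measurable_ofLp 2 _))

lemma measurableSet_box (d : ℕ) (a : ℝ) : MeasurableSet (box d a) :=
  measurableSet_setOf_forall_coord_mem fun _ => measurableSet_Ioc

lemma measurableSet_Bset (d n : ℕ) : MeasurableSet (Bset d n) := by
  unfold Bset
  split_ifs
  exacts [measurableSet_box d 1, (measurableSet_box d _).diff (measurableSet_box d _)]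

lemma measurableSet_cell (d l : ℕ) (k : Fin d → Fin (2 ^ l)) : MeasurableSet (cell d l k) :=
  measurableSet_setOf_forall_coord_mem fun _ => measurableSet_Ioc

lemma pairwise_disjoint_cell (d l : ℕ) : Pairwise (Function.onFun Disjoint (cell d l)) := by
  intro k k' hkk'
  obtain ⟨i, hi⟩ := Function.ne_iff.mp hkk'
  have hIoc := pairwise_disjoint_Ioc_add_zsmul (-1 : ℝ) (2 ^ (1 - (l : ℤ)))
    (show ((k i : ℕ) : ℤ) ≠ (k' i : ℕ) from Int.natCast_inj.not.2 (Fin.val_ne_of_ne hi))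
  refine Set.disjoint_left.2 fun x hx hx' => hIoc.ne_of_mem (a := x i) (b := x i) ?_ ?_ rfl
  · simpa [zsmul_eq_mul, add_mul] using hx i
  · simpa [zsmul_eq_mul, add_mul] using hx' i

lemma sum_measureReal_le_of_pairwise_disjoint {α ι : Type*} [MeasurableSpace α] [Fintype ι]
    {ρ : Measure α} [IsFiniteMeasure ρ] {A : ι → Set α} {B : Set α}
    (hd : Pairwise (Function.onFun Disjoint A)) (hA : ∀ i, MeasurableSet (A i))
    (hAB : ∀ i, A i ⊆ B) : ∑ i, ρ.real (A i) ≤ ρ.real B := by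
  rw [← measureReal_iUnion_fintype hd hA]
  exact measureReal_mono (Set.iUnion_subset hAB)

lemma Real.sum_sqrt_le_sqrt_card_mul_sqrt_sum {ι : Type*} [Fintype ι] {a : ι → ℝ}
    (ha : ∀ i, 0 ≤ a i) : ∑ i, √(a i) ≤ √(Fintype.card ι) * √(∑ i, a i) := by
  simpa using Real.sum_sqrt_mul_sqrt_le Finset.univ (fun _ => zero_le_one) ha

lemma sqrt_card_cell_index (d l : ℕ) :
    √(Fintype.card (Fin d → Fin (2 ^ l)) : ℝ) = (2 : ℝ) ^ (((d * l : ℕ) : ℝ) / 2) := by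
  rw [Fintype.card_fun, Fintype.card_fin, Fintype.card_fin, ← pow_mul, mul_comm l d,
    Nat.cast_pow, Nat.cast_two, Real.sqrt_eq_rpow, ← Real.rpow_natCast,
    ← Real.rpow_mul zero_le_two, one_div, div_eq_mul_inv]

section MeanAbsoluteDeviation

variable {Ω : Type*} [MeasurableSpace Ω] {P : Measure Ω} [IsProbabilityMeasure P] {Z : Ω → ℝ}

lemma integral_abs_sub_integral_le_two_mul (hZ : Integrable Z P) (hZ0 : 0 ≤ Z) :
    ∫ ω, |Z ω - ∫ ω', Z ω' ∂P| ∂P ≤ 2 * ∫ ω, Z ω ∂P := by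
  have hmean : 0 ≤ ∫ ω, Z ω ∂P := integral_nonneg hZ0
  calc ∫ ω, |Z ω - ∫ ω', Z ω' ∂P| ∂P ≤ ∫ ω, (Z ω + ∫ ω', Z ω' ∂P) ∂P := by
        refine integral_mono (hZ.sub (integrable_const _)).abs (hZ.add (integrable_const _))
          fun ω => ?_
        exact (abs_sub _ _).trans_eq (by rw [abs_of_nonneg (hZ0 ω), abs_of_nonneg hmean])
    _ = 2 * ∫ ω, Z ω ∂P := by
        rw [integral_add hZ (integrable_const _), integral_const]
        simp only [probReal_univ, one_smul]
        ring

lemma integral_abs_sub_integral_le_sqrt_variance (hZ : MemLp Z 2 P) :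
    ∫ ω, |Z ω - ∫ ω', Z ω' ∂P| ∂P ≤ √(variance Z P) := by
  set W : Ω → ℝ := fun ω => |Z ω - ∫ ω', Z ω' ∂P|
  have hW : MemLp W 2 P := (hZ.sub (memLp_const _)).abs
  have hW_sq : ∫ ω, (W ^ 2) ω ∂P = variance Z P := by
    simp only [variance_eq_integral hZ.aemeasurable, Pi.pow_apply, W, sq_abs]
  have hW_var := variance_nonneg W P
  rw [variance_eq_sub hW, hW_sq] at hW_var
  exact Real.le_sqrt_of_sq_le (by linarith)

end MeanAbsoluteDeviation

section IndicatorComp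

variable {Ω α : Type*} [MeasurableSpace Ω] [MeasurableSpace α] {P : Measure Ω} {f : Ω → α}
  {s : Set α}

lemma memLp_indicator_one_comp [IsFiniteMeasure P] (hf : Measurable f) (hs : MeasurableSet s)
    (p : ℝ≥0∞) : MemLp (fun ω => s.indicator (1 : α → ℝ) (f ω)) p P :=
  MemLp.of_bound ((measurable_one.indicator hs).comp hf).aestronglyMeasurable 1
    (ae_of_all _ fun ω => (norm_indicator_le_norm_self _ _).trans_eq (by simp))

lemma integral_indicator_one_comp (hf : Measurable f) (hs : MeasurableSet s) :
    ∫ ω, s.indicator 1 (f ω) ∂P = (P.map f).real s := by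
  rw [← integral_map hf.aemeasurable (measurable_one.indicator hs).aestronglyMeasurable,
    integral_indicator_one hs]

lemma variance_indicator_one_comp_le [IsProbabilityMeasure P] (hf : Measurable f)
    (hs : MeasurableSet s) :
    variance (fun ω => s.indicator (1 : α → ℝ) (f ω)) P ≤ (P.map f).real s := by
  have h_sq : (fun ω => s.indicator (1 : α → ℝ) (f ω)) ^ 2 = fun ω => s.indicator 1 (f ω) := by
    ext ω
    by_cases h : f ω ∈ s <;> simp [h]
  calc variance (fun ω => s.indicator (1 : α → ℝ) (f ω)) P
      ≤ ∫ ω, ((fun ω => s.indicator (1 : α → ℝ) (f ω)) ^ 2) ω ∂P :=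
        variance_le_expectation_sq ((measurable_one.indicator hs).comp hf).aestronglyMeasurable
    _ = (P.map f).real s := by rw [h_sq, integral_indicator_one_comp hf hs]

end IndicatorComp

lemma ENNReal.toReal_inv_ofReal_sum_mul_sum {ι : Type*} [Fintype ι] {w : ι → ℝ}
    (hw : ∀ j, 0 ≤ w j) {m : ι → ℝ≥0∞} (hm : ∀ j, m j ≠ ∞) :
    ((ENNReal.ofReal (∑ j, w j))⁻¹ * ∑ j, ENNReal.ofReal (w j) * m j).toReal
      = (∑ j, w j)⁻¹ * ∑ j, w j * (m j).toReal := by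
  rw [ENNReal.toReal_mul, ENNReal.toReal_inv,
    ENNReal.toReal_sum fun j _ => ENNReal.mul_ne_top ENNReal.ofReal_ne_top (hm j),
    ENNReal.toReal_ofReal (Finset.sum_nonneg fun j _ => hw j)]
  simp only [ENNReal.toReal_mul, ENNReal.toReal_ofReal (hw _)]

section WeightedMeasures

variable {d N : ℕ} {ξ : Fin N → ℝ}

lemma wMix_apply (μ : Fin N → Measure (Ed d)) (A : Set (Ed d)) :
    wMix ξ μ A = (ENNReal.ofReal (∑ j, ξ j))⁻¹ * ∑ j, ENNReal.ofReal (ξ j) * μ j A := by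
  simp [wMix, Measure.finsetSum_apply]

lemma wMix_toReal_apply (hξ : ∀ j, 0 ≤ ξ j) {μ : Fin N → Measure (Ed d)}
    [∀ j, IsFiniteMeasure (μ j)] (A : Set (Ed d)) :
    (wMix ξ μ A).toReal = (∑ j, ξ j)⁻¹ * ∑ j, ξ j * (μ j).real A := by
  rw [wMix_apply, ENNReal.toReal_inv_ofReal_sum_mul_sum hξ fun j => measure_ne_top _ _]
  rfl

lemma wEmp_toReal_apply (hξ : ∀ j, 0 ≤ ξ j) (x : Fin N → Ed d) {A : Set (Ed d)}
    (hA : MeasurableSet A) :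
    (wEmp ξ x A).toReal = (∑ j, ξ j)⁻¹ * ∑ j, ξ j * A.indicator 1 (x j) := by
  have hdirac : ∀ j, Measure.dirac (x j) A = ENNReal.ofReal (A.indicator 1 (x j)) := fun j => by
    by_cases h : x j ∈ A <;> simp [Measure.dirac_apply' _ hA, h]
  simp only [wEmp, Measure.smul_apply, Measure.finsetSum_apply, smul_eq_mul, hdirac]
  rw [ENNReal.toReal_inv_ofReal_sum_mul_sum hξ fun j => ENNReal.ofReal_ne_top]
  congr 2 with j
  by_cases h : x j ∈ A <;> simp [h]

lemma isFiniteMeasure_wMix (hξ : ∀ j, 0 ≤ ξ j) (μ : Fin N → Measure (Ed d))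
    [∀ j, IsFiniteMeasure (μ j)] : IsFiniteMeasure (wMix ξ μ) := by
  refine ⟨?_⟩
  rw [wMix_apply]
  rcases (Finset.sum_nonneg fun j _ => hξ j).eq_or_lt with hzero | hpos
  · have hξ_zero : ∀ j, ξ j = 0 := fun j =>
      (Finset.sum_eq_zero_iff_of_nonneg fun j _ => hξ j).1 hzero.symm j (Finset.mem_univ j)
    simp [hξ_zero]
  · exact ENNReal.mul_lt_top (ENNReal.inv_lt_top.2 (ENNReal.ofReal_pos.2 hpos))
      (ENNReal.sum_lt_top.2 fun j _ =>
        ENNReal.mul_lt_top ENNReal.ofReal_lt_top (measure_lt_top _ _))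

end WeightedMeasures

section RandomEmpiricalMeasure

variable {d N : ℕ} {Ω : Type*} [MeasurableSpace Ω] {P : Measure Ω} [IsProbabilityMeasure P]
  {X : Fin N → Ω → Ed d} {ξ : Fin N → ℝ} {A : Set (Ed d)}

lemma memLp_wEmp_toReal (hX : ∀ j, Measurable (X j)) (hξ : ∀ j, 0 ≤ ξ j)
    (hA : MeasurableSet A) : MemLp (fun ω => (wEmp ξ (fun j => X j ω) A).toReal) 2 P := by
  simp_rw [wEmp_toReal_apply hξ _ hA]
  exact (memLp_finsetSum _ fun j _ =>
    (memLp_indicator_one_comp (hX j) hA 2).const_mul _).const_mul _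

lemma integral_wEmp_toReal (hX : ∀ j, Measurable (X j)) (hξ : ∀ j, 0 ≤ ξ j)
    (hA : MeasurableSet A) :
    ∫ ω, (wEmp ξ (fun j => X j ω) A).toReal ∂P = (wMix ξ (fun j => P.map (X j)) A).toReal := by
  simp_rw [wEmp_toReal_apply hξ _ hA, wMix_toReal_apply hξ]
  rw [integral_const_mul, integral_finsetSum _ fun j _ =>
    ((memLp_indicator_one_comp (hX j) hA 1).integrable le_rfl).const_mul _]
  simp_rw [integral_const_mul, integral_indicator_one_comp (hX _) hA]

lemma variance_wEmp_toReal_le (hX : ∀ j, Measurable (X j)) (hindep : iIndepFun X P)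
    (hξ : ∀ j, ξ j ∈ Set.Icc (0 : ℝ) 1) (hA : MeasurableSet A) :
    variance (fun ω => (wEmp ξ (fun j => X j ω) A).toReal) P
      ≤ (wMix ξ (fun j => P.map (X j)) A).toReal / ∑ j, ξ j := by
  have hξ0 : ∀ j, 0 ≤ ξ j := fun j => (hξ j).1
  set Y : Fin N → Ω → ℝ := fun j ω => ξ j * A.indicator 1 (X j ω)
  have hY : ∀ j ∈ Finset.univ, MemLp (Y j) 2 P := fun j _ =>
    (memLp_indicator_one_comp (hX j) hA 2).const_mul _
  have hY_indep : Set.Pairwise (Finset.univ : Finset (Fin N)) fun i j => Y i ⟂ᵢ[P] Y j :=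
    fun i _ j _ hij => (hindep.indepFun hij).comp
      ((measurable_one.indicator hA).const_mul _) ((measurable_one.indicator hA).const_mul _)
  have hvar_sum : variance (fun ω => ∑ j, Y j ω) P
      = ∑ j, ξ j ^ 2 * variance (fun ω => A.indicator (1 : Ed d → ℝ) (X j ω)) P := by
    rw [← Finset.sum_fn, IndepFun.variance_sum hY hY_indep]
    simp_rw [Y, variance_const_mul]
  have hvar_le : ∀ j, ξ j ^ 2 * variance (fun ω => A.indicator (1 : Ed d → ℝ) (X j ω)) P
      ≤ ξ j * (P.map (X j)).real A := fun j =>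
    mul_le_mul (pow_le_of_le_one (hξ j).1 (hξ j).2 two_ne_zero)
      (variance_indicator_one_comp_le (hX j) hA) (variance_nonneg _ _) (hξ0 j)
  simp_rw [wEmp_toReal_apply hξ0 _ hA, wMix_toReal_apply hξ0]
  rw [variance_const_mul, hvar_sum]
  calc (∑ j, ξ j)⁻¹ ^ 2 * ∑ j, ξ j ^ 2 * variance (fun ω => A.indicator 1 (X j ω)) P
      ≤ (∑ j, ξ j)⁻¹ ^ 2 * ∑ j, ξ j * (P.map (X j)).real A :=
        mul_le_mul_of_nonneg_left (Finset.sum_le_sum fun j _ => hvar_le j) (sq_nonneg _)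
    _ = ((∑ j, ξ j)⁻¹ * ∑ j, ξ j * (P.map (X j)).real A) / ∑ j, ξ j := by ring

theorem integral_abs_wEmp_sub_wMix_le_two_mul (hX : ∀ j, Measurable (X j))
    (hξ : ∀ j, 0 ≤ ξ j) (hA : MeasurableSet A) :
    ∫ ω, |(wEmp ξ (fun j => X j ω) A).toReal - (wMix ξ (fun j => P.map (X j)) A).toReal| ∂P
      ≤ 2 * (wMix ξ (fun j => P.map (X j)) A).toReal := by
  have h := integral_abs_sub_integral_le_two_mul
    ((memLp_wEmp_toReal (P := P) hX hξ hA).integrable one_le_two) fun ω => ENNReal.toReal_nonneg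
  rwa [integral_wEmp_toReal hX hξ hA] at h

theorem integral_abs_wEmp_sub_wMix_le_sqrt (hX : ∀ j, Measurable (X j))
    (hindep : iIndepFun X P) (hξ : ∀ j, ξ j ∈ Set.Icc (0 : ℝ) 1) (hA : MeasurableSet A) :
    ∫ ω, |(wEmp ξ (fun j => X j ω) A).toReal - (wMix ξ (fun j => P.map (X j)) A).toReal| ∂P
      ≤ √((wMix ξ (fun j => P.map (X j)) A).toReal / ∑ j, ξ j) := by
  have hξ0 : ∀ j, 0 ≤ ξ j := fun j => (hξ j).1
  have h := integral_abs_sub_integral_le_sqrt_variance (memLp_wEmp_toReal (P := P) hX hξ0 hA)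
  rw [integral_wEmp_toReal hX hξ0 hA] at h
  exact h.trans (Real.sqrt_le_sqrt (variance_wEmp_toReal_le hX hindep hξ hA))

end RandomEmpiricalMeasure

theorem stmt_6_general {d N : ℕ} {Ω : Type} [MeasurableSpace Ω] (P : Measure Ω)
    [IsProbabilityMeasure P]
    (X : Fin N → Ω → Ed d) (hXmeas : ∀ j, Measurable (X j))
    (hindep : iIndepFun X P)
    (μ : Fin N → Measure (Ed d)) (hlaw : ∀ j, P.map (X j) = μ j)
    (ξ : Fin N → ℝ) (hξ : ∀ j, ξ j ∈ Set.Icc (0:ℝ) 1)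
    (n l : ℕ) :
    ∑ k : Fin d → Fin (2 ^ l),
        ∫ ω, |((wEmp ξ fun j => X j ω) ((fun x => (2:ℝ) ^ n • x) '' cell d l k ∩ Bset d n)).toReal
            - ((wMix ξ μ) ((fun x => (2:ℝ) ^ n • x) '' cell d l k ∩ Bset d n)).toReal| ∂P ≤
      min (2 * ((wMix ξ μ) (Bset d n)).toReal)
        ((2:ℝ) ^ (((d * l : ℕ) : ℝ) / 2) *
          Real.sqrt (((wMix ξ μ) (Bset d n)).toReal / (∑ j, ξ j))) := by
  obtain rfl : μ = fun j => P.map (X j) := funext fun j => (hlaw j).symm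
  have hξ0 : ∀ j, 0 ≤ ξ j := fun j => (hξ j).1
  have hNw : 0 ≤ ∑ j, ξ j := Finset.sum_nonneg fun j _ => hξ0 j
  set mix := wMix ξ fun j => P.map (X j)
  have : IsFiniteMeasure mix := isFiniteMeasure_wMix hξ0 _
  set A : (Fin d → Fin (2 ^ l)) → Set (Ed d) :=
    fun k => (fun x => (2:ℝ) ^ n • x) '' cell d l k ∩ Bset d n
  have hA : ∀ k, MeasurableSet (A k) := fun k =>
    ((measurableSet_cell d l k).const_smul₀ _).inter (measurableSet_Bset d n)
  have hA_disj : Pairwise (Function.onFun Disjoint A) := fun k k' hkk' =>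
    (Set.disjoint_image_of_injective (smul_right_injective _ (by positivity))
      (pairwise_disjoint_cell d l hkk')).mono Set.inter_subset_left Set.inter_subset_left
  have hsum : ∑ k, (mix (A k)).toReal ≤ (mix (Bset d n)).toReal :=
    sum_measureReal_le_of_pairwise_disjoint hA_disj hA fun k => Set.inter_subset_right
  refine le_min ?_ ?_
  · calc _ ≤ ∑ k, 2 * (mix (A k)).toReal :=
          Finset.sum_le_sum fun k _ => integral_abs_wEmp_sub_wMix_le_two_mul hXmeas hξ0 (hA k)
      _ ≤ _ := by rw [← Finset.mul_sum]; gcongr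
  · calc _ ≤ ∑ k, √((mix (A k)).toReal / ∑ j, ξ j) :=
          Finset.sum_le_sum fun k _ => integral_abs_wEmp_sub_wMix_le_sqrt hXmeas hindep hξ (hA k)
      _ ≤ √(Fintype.card (Fin d → Fin (2 ^ l)) : ℝ) * √((∑ k, (mix (A k)).toReal) / ∑ j, ξ j) := by
          rw [Finset.sum_div]
          exact Real.sum_sqrt_le_sqrt_card_mul_sqrt_sum fun k => by positivity
      _ ≤ _ := by rw [sqrt_card_cell_index]; gcongr

/-- the chaining estimate on dyadic cells: for all `n, l ≥ 0`,
`∑_{F ∈ P_l} E|ν(2ⁿF ∩ B_n) − μ̄(2ⁿF ∩ B_n)| ≤ min{2 μ̄(B_n), 2^{dl/2} √(μ̄(B_n)/N_w)}`. -/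
theorem stmt_6 {d N : ℕ} {Ω : Type} [MeasurableSpace Ω] (P : Measure Ω)
    [IsProbabilityMeasure P]
    (X : Fin N → Ω → Ed d) (hXmeas : ∀ j, Measurable (X j))
    (hindep : iIndepFun X P)
    (μ : Fin N → Measure (Ed d)) (hlaw : ∀ j, P.map (X j) = μ j)
    (ξ : Fin N → ℝ) (hξ : ∀ j, ξ j ∈ Set.Icc (0:ℝ) 1) (hNw : 0 < ∑ j, ξ j)
    (n l : ℕ) :
    ∑ k : Fin d → Fin (2 ^ l),
        ∫ ω, |((wEmp ξ fun j => X j ω) ((fun x => (2:ℝ) ^ n • x) '' cell d l k ∩ Bset d n)).toReal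
            - ((wMix ξ μ) ((fun x => (2:ℝ) ^ n • x) '' cell d l k ∩ Bset d n)).toReal| ∂P ≤
      min (2 * ((wMix ξ μ) (Bset d n)).toReal)
        ((2:ℝ) ^ (((d * l : ℕ) : ℝ) / 2) *
          Real.sqrt (((wMix ξ μ) (Bset d n)).toReal / (∑ j, ξ j))) :=
  stmt_6_general P X hXmeas hindep μ hlaw ξ hξ n l

end
end

section
/- Let n ∈ ℕ, let J_1, …, J_n be intervals covering [0,1], let K > 0, and let G : [0,1]² → [0,1] be a graphon which is blockwise K-Lipschitz on the blocks J_i × J_j and satisfies the uniform degree lower bound G_∞ := inf_{u∈[0,1]} ‖G(u,·)‖₁ > 0. For N ∈ ℕ let G_N(u,v) := G(⌈Nu⌉/N, ⌈Nv⌉/N) and u_i := i/N. Then there exist a constant C > 0 (depending only on K, n, G_∞) and N₀ ∈ ℕ such that for all N ≥ N₀ and all i ∈ {1,…,N}: ∫₀¹ | G(u_i,v)/‖G(u_i,·)‖₁ − G_N(u_i,v)/‖G_N(u_i,·)‖₁ | dv ≤ C/N; in particular ‖G_N(u_i,·)‖₁ ≥ G_∞/2 for all such N and i. -/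
open MeasureTheory Set Filter

noncomputable section

/-- The degree function `‖G(u,·)‖₁ = ∫₀¹ G(u,v) dv` of a graphon. -/
def deg (G : ℝ → ℝ → ℝ) (u : ℝ) : ℝ := ∫ v in Set.Icc (0:ℝ) 1, G u v

/-- The step graphon `G_N(u,v) = G(⌈Nu⌉/N, ⌈Nv⌉/N)` associated with `G`. -/
def stepG (G : ℝ → ℝ → ℝ) (N : ℕ) (u v : ℝ) : ℝ :=
  G ((⌈(N : ℝ) * u⌉ : ℝ) / N) ((⌈(N : ℝ) * v⌉ : ℝ) / N)

/-- A graphon: a symmetric measurable function `[0,1]² → [0,1]`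
(represented as a total function on `ℝ²`). -/
structure IsGraphon (G : ℝ → ℝ → ℝ) : Prop where
  measurable : Measurable (Function.uncurry G)
  symm : ∀ u v, G u v = G v u
  mem_Icc : ∀ u ∈ Set.Icc (0:ℝ) 1, ∀ v ∈ Set.Icc (0:ℝ) 1, G u v ∈ Set.Icc (0:ℝ) 1


/-!
Rounding `v ↦ ⌈Nv⌉/N` moves each point by at most `1/N`, and it keeps `v` inside its block `J j`
unless `v` lies within `1/N` below `sup J j`; these exceptional points have total measure at most
`n/N`. Hence, at a grid point `u = i/N`, the rows `G(u,·)` and `G_N(u,·) = G(u, ⌈N·⌉/N)` are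
`(K + n)/N`-close in `L¹`, and so are their degrees. Once `(K + n)/N ≤ G∞/2` the degree of `G_N`
is at least `G∞/2`, and writing `a/A - b/B = (a - b)/A + b (1/A - 1/B)` with `∫ b = B` shows that
the normalized rows are `2(K + n)/(N G∞)`-close.
-/

open MeasureTheory Set

def gridCeil (N : ℕ) (v : ℝ) : ℝ := ⌈(N : ℝ) * v⌉ / N

lemma stepG_eq_gridCeil (G : ℝ → ℝ → ℝ) (N : ℕ) (u v : ℝ) :
    stepG G N u v = G (gridCeil N u) (gridCeil N v) :=
  rfl

section gridCeil

variable {N : ℕ}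

lemma measurable_gridCeil (N : ℕ) : Measurable (gridCeil N) :=
  (measurable_from_top.comp (measurable_const.mul measurable_id).ceil).div_const _

lemma le_gridCeil (hN : 0 < N) (v : ℝ) : v ≤ gridCeil N v := by
  rw [gridCeil, le_div_iff₀ (by positivity), mul_comm]
  exact Int.le_ceil _

lemma gridCeil_le (hN : 0 < N) (v : ℝ) : gridCeil N v ≤ v + 1 / N := by
  rw [gridCeil, div_le_iff₀ (by positivity), add_mul, one_div_mul_cancel (by positivity),
    mul_comm]
  exact (Int.ceil_lt_add_one _).le

lemma gridCeil_mem_Icc {v : ℝ} (hv : v ∈ Icc (0 : ℝ) 1) : gridCeil N v ∈ Icc (0 : ℝ) 1 := by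
  rcases N.eq_zero_or_pos with rfl | hN
  · simp [gridCeil]
  have hN' : (0 : ℝ) < N := by positivity
  refine ⟨div_nonneg ?_ hN'.le, (div_le_one hN').2 ?_⟩
  · exact_mod_cast Int.ceil_nonneg (mul_nonneg hN'.le hv.1)
  · exact_mod_cast Int.ceil_le.2 (by simpa using mul_le_of_le_one_right hN'.le hv.2)

lemma gridCeil_natCast_div (N i : ℕ) : gridCeil N (i / N) = i / N := by
  rcases N.eq_zero_or_pos with rfl | hN
  · simp [gridCeil]
  rw [gridCeil, mul_div_cancel₀ _ (by positivity), Int.ceil_natCast, Int.cast_natCast]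

end gridCeil

lemma Set.OrdConnected.mem_of_le_of_lt_csSup {α : Type*} [ConditionallyCompleteLinearOrder α]
    {S : Set α} (hS : S.OrdConnected) {v x : α} (hv : v ∈ S) (hvx : v ≤ x) (hx : x < sSup S) :
    x ∈ S := by
  obtain ⟨y, hy, hxy⟩ := exists_lt_of_lt_csSup ⟨v, hv⟩ hx
  exact hS.out hv hy ⟨hvx, hxy.le⟩

section blocks

variable {ι : Type*} {J : ι → Set ℝ} {N : ℕ}

/-- Outside this set, rounding up to the grid `ℕ/N` keeps a point of `[0,1]` in its block. -/
def blockEdge (J : ι → Set ℝ) (N : ℕ) : Set ℝ :=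
  ⋃ j, Icc (sSup (J j ∩ Icc 0 1) - 1 / N) (sSup (J j ∩ Icc 0 1))

lemma measurableSet_blockEdge [Finite ι] (J : ι → Set ℝ) (N : ℕ) : MeasurableSet (blockEdge J N) :=
  .iUnion fun _ => measurableSet_Icc

lemma volume_blockEdge_lt_top [Finite ι] (J : ι → Set ℝ) (N : ℕ) :
    volume (blockEdge J N) < ⊤ := by
  simpa [blockEdge] using measure_biUnion_lt_top finite_univ fun j _ => measure_Icc_lt_top

lemma volume_real_blockEdge_le [Fintype ι] (J : ι → Set ℝ) (N : ℕ) :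
    volume.real (blockEdge J N) ≤ Fintype.card ι / N := by
  refine (measureReal_iUnion_fintype_le _).trans_eq ?_
  simp [div_eq_mul_inv]

lemma gridCeil_mem_of_notMem_blockEdge (hN : 0 < N) {j : ι} (hJ : (J j).OrdConnected) {v : ℝ}
    (hv : v ∈ J j ∩ Icc 0 1) (hvB : v ∉ blockEdge J N) : gridCeil N v ∈ J j := by
  have hvs : v ≤ sSup (J j ∩ Icc 0 1) := le_csSup (bddAbove_Icc.mono inter_subset_right) hv
  have hvs' : v < sSup (J j ∩ Icc 0 1) - 1 / N := by
    by_contra! h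
    exact hvB (mem_iUnion.2 ⟨j, h, hvs⟩)
  refine ((hJ.inter ordConnected_Icc).mem_of_le_of_lt_csSup hv (le_gridCeil hN v) ?_).1
  linarith [gridCeil_le hN v]

variable {f : ℝ → ℝ} {K : ℝ}

lemma abs_sub_comp_gridCeil_le (hN : 0 < N) (hK : 0 ≤ K)
    (hf : ∀ v ∈ Icc (0 : ℝ) 1, f v ∈ Icc (0 : ℝ) 1) (hJ : ∀ j, (J j).OrdConnected)
    (hcov : Icc (0 : ℝ) 1 ⊆ ⋃ j, J j)
    (hLip : ∀ j, ∀ v ∈ J j, ∀ v' ∈ J j, |f v - f v'| ≤ K * |v - v'|)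
    {v : ℝ} (hv : v ∈ Icc (0 : ℝ) 1) :
    |f v - f (gridCeil N v)| ≤ K / N + (blockEdge J N).indicator 1 v := by
  by_cases hvB : v ∈ blockEdge J N
  · have h₁ := hf v hv
    have h₂ := hf _ (gridCeil_mem_Icc (N := N) hv)
    rw [indicator_of_mem hvB, Pi.one_apply, abs_le]
    have : 0 ≤ K / N := by positivity
    constructor <;> linarith [h₁.1, h₁.2, h₂.1, h₂.2]
  obtain ⟨j, hvJ⟩ := mem_iUnion.1 (hcov hv)
  have hw := gridCeil_mem_of_notMem_blockEdge hN (hJ j) ⟨hvJ, hv⟩ hvB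
  have hvw : |v - gridCeil N v| ≤ 1 / N := by
    rw [abs_sub_comm, abs_of_nonneg (sub_nonneg.2 (le_gridCeil hN v))]
    linarith [gridCeil_le hN v]
  calc |f v - f (gridCeil N v)| ≤ K * |v - gridCeil N v| := hLip j v hvJ _ hw
    _ ≤ K * (1 / N) := by gcongr
    _ = K / N + (blockEdge J N).indicator 1 v := by
      rw [indicator_of_notMem hvB, add_zero, mul_one_div]

lemma integral_abs_sub_comp_gridCeil_le [Fintype ι] (hN : 0 < N) (hK : 0 ≤ K)
    (hf : ∀ v ∈ Icc (0 : ℝ) 1, f v ∈ Icc (0 : ℝ) 1) (hJ : ∀ j, (J j).OrdConnected)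
    (hcov : Icc (0 : ℝ) 1 ⊆ ⋃ j, J j)
    (hLip : ∀ j, ∀ v ∈ J j, ∀ v' ∈ J j, |f v - f v'| ≤ K * |v - v'|) :
    ∫ v in Icc (0 : ℝ) 1, |f v - f (gridCeil N v)| ≤ (K + Fintype.card ι) / N := by
  have hB := measurableSet_blockEdge J N
  have hbound : IntegrableOn (fun v => K / N + (blockEdge J N).indicator 1 v) (Icc 0 1) :=
    (integrable_const _).add ((integrable_const 1).indicator hB)
  calc ∫ v in Icc (0 : ℝ) 1, |f v - f (gridCeil N v)|
      ≤ ∫ v in Icc (0 : ℝ) 1, (K / N + (blockEdge J N).indicator 1 v) :=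
        integral_mono_of_nonneg (.of_forall fun _ => abs_nonneg _) hbound
          (ae_restrict_of_forall_mem measurableSet_Icc fun v hv =>
            abs_sub_comp_gridCeil_le hN hK hf hJ hcov hLip hv)
    _ = K / N + volume.real (blockEdge J N ∩ Icc 0 1) := by
      rw [integral_add (integrable_const _) ((integrable_const 1).indicator hB),
        integral_indicator_one hB, measureReal_restrict_apply hB]
      simp
    _ ≤ K / N + Fintype.card ι / N := by
      gcongr
      exact (measureReal_mono inter_subset_left (volume_blockEdge_lt_top J N).ne).trans
        (volume_real_blockEdge_le J N)
    _ = (K + Fintype.card ι) / N := by ring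

end blocks

section normalize

variable {α : Type*} [MeasurableSpace α] {μ : Measure α} {f g : α → ℝ}

lemma abs_integral_sub_integral_le (hf : Integrable f μ) (hg : Integrable g μ) :
    |∫ x, f x ∂μ - ∫ x, g x ∂μ| ≤ ∫ x, |f x - g x| ∂μ := by
  rw [← integral_sub hf hg]
  exact abs_integral_le_integral_abs

lemma integral_abs_div_integral_sub_le (hf : Integrable f μ) (hg : Integrable g μ)
    (hg0 : 0 ≤ᵐ[μ] g) (hA : 0 < ∫ x, f x ∂μ) :
    ∫ x, |f x / ∫ y, f y ∂μ - g x / ∫ y, g y ∂μ| ∂μ ≤ 2 * (∫ x, |f x - g x| ∂μ) / ∫ x, f x ∂μ := by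
  set A := ∫ x, f x ∂μ
  set B := ∫ x, g x ∂μ
  have hdiff : Integrable (fun x => |f x - g x|) μ := (hf.sub hg).abs
  have hbound : Integrable (fun x => |f x - g x| / A + g x * |1 / A - 1 / B|) μ :=
    (hdiff.div_const A).add (hg.mul_const _)
  have hpoint : ∀ᵐ x ∂μ, |f x / A - g x / B| ≤ |f x - g x| / A + g x * |1 / A - 1 / B| := by
    filter_upwards [hg0] with x hx
    calc |f x / A - g x / B| = |(f x - g x) / A + g x * (1 / A - 1 / B)| := by ring_nf
      _ ≤ |(f x - g x) / A| + |g x * (1 / A - 1 / B)| := abs_add_le _ _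
      _ = |f x - g x| / A + g x * |1 / A - 1 / B| := by
        rw [abs_div, abs_of_pos hA, abs_mul, abs_of_nonneg hx]
  have hBA : B * |1 / A - 1 / B| ≤ |A - B| / A := by
    rcases eq_or_ne B 0 with hB | hB
    · simp [hB, div_nonneg (abs_nonneg _) hA.le]
    have hBA : B * (1 / A - 1 / B) = (B - A) / A := by field_simp
    have hB0 : 0 ≤ B := integral_nonneg_of_ae hg0
    refine le_of_eq ?_
    calc B * |1 / A - 1 / B| = |B * (1 / A - 1 / B)| := by rw [abs_mul, abs_of_nonneg hB0]
      _ = |A - B| / A := by rw [hBA, abs_div, abs_of_pos hA, abs_sub_comm]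
  calc ∫ x, |f x / A - g x / B| ∂μ
      ≤ ∫ x, (|f x - g x| / A + g x * |1 / A - 1 / B|) ∂μ :=
        integral_mono_of_nonneg (.of_forall fun _ => abs_nonneg _) hbound hpoint
    _ = (∫ x, |f x - g x| ∂μ) / A + B * |1 / A - 1 / B| := by
      rw [integral_add (hdiff.div_const A) (hg.mul_const _), integral_div, integral_mul_const]
    _ ≤ (∫ x, |f x - g x| ∂μ) / A + |A - B| / A := by gcongr
    _ ≤ 2 * (∫ x, |f x - g x| ∂μ) / A := by
      rw [two_mul, add_div]
      gcongr
      exact abs_integral_sub_integral_le hf hg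

end normalize

lemma IsGraphon.integrableOn_comp {G : ℝ → ℝ → ℝ} (hG : IsGraphon G) {u : ℝ}
    (hu : u ∈ Icc (0 : ℝ) 1) {φ : ℝ → ℝ} (hφ : Measurable φ)
    (hφI : MapsTo φ (Icc (0 : ℝ) 1) (Icc 0 1)) :
    IntegrableOn (fun v => G u (φ v)) (Icc 0 1) :=
  Measure.integrableOn_of_bounded (M := 1) (by simp)
    (hG.measurable.comp (measurable_const.prodMk hφ)).aestronglyMeasurable
    (ae_restrict_of_forall_mem measurableSet_Icc fun v hv => by
      have h := hG.mem_Icc u hu _ (hφI hv)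
      exact abs_le.2 ⟨by linarith [h.1], h.2⟩)

/-- for a blockwise `K`-Lipschitz graphon `G` whose degree function is bounded
below by `G∞ > 0`, the normalized kernels of the step graphons `G_N` converge at the grid
points at rate `C/N` (for `N ≥ N₀`), and the degrees of `G_N` stay above `G∞/2`; the
constants `C, N₀` depend only on `K`, `n` and `G∞`. -/
theorem stmt_13 (n : ℕ) (K : ℝ) (hK : 0 < K) (Ginf : ℝ) (hGinf : 0 < Ginf) :
    ∃ C : ℝ, 0 < C ∧ ∃ N₀ : ℕ, ∀ (G : ℝ → ℝ → ℝ) (J : Fin n → Set ℝ),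
      IsGraphon G →
      (∀ i, (J i).OrdConnected) → Set.Icc (0:ℝ) 1 ⊆ (⋃ i, J i) →
      (∀ i j : Fin n, ∀ u ∈ J i, ∀ u' ∈ J i, ∀ v ∈ J j, ∀ v' ∈ J j,
        |G u v - G u' v'| ≤ K * (|u - u'| + |v - v'|)) →
      (∀ u ∈ Set.Icc (0:ℝ) 1, Ginf ≤ deg G u) →
      ∀ N i : ℕ, N₀ ≤ N → 1 ≤ i → i ≤ N →
        (∫ v in Set.Icc (0:ℝ) 1,
            |G ((i : ℝ) / N) v / deg G ((i : ℝ) / N) -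
              stepG G N ((i : ℝ) / N) v / deg (stepG G N) ((i : ℝ) / N)|) ≤ C / N ∧
        Ginf / 2 ≤ deg (stepG G N) ((i : ℝ) / N) := by
  refine ⟨2 * (K + n) / Ginf, by positivity, max 1 ⌈2 * (K + n) / Ginf⌉₊, ?_⟩
  intro G J hG hJ hcov hLip hdeg N i hN hi hiN
  have hN0 : 0 < N := (le_max_left _ _).trans hN
  have hε : (K + n) / N ≤ Ginf / 2 := by
    have hN₀ : 2 * (K + n) / Ginf ≤ N :=
      (Nat.le_ceil _).trans (Nat.cast_le.2 ((le_max_right _ _).trans hN))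
    rw [div_le_iff₀ hGinf] at hN₀
    rw [div_le_iff₀ (by positivity)]
    linarith
  set u : ℝ := i / N
  have hu : u ∈ Icc (0 : ℝ) 1 :=
    ⟨by positivity, div_le_one_of_le₀ (by exact_mod_cast hiN) (by positivity)⟩
  have hrow (v : ℝ) : stepG G N u v = G u (gridCeil N v) := by
    rw [stepG_eq_gridCeil, gridCeil_natCast_div]
  have hdegN : deg (stepG G N) u = ∫ v in Icc (0 : ℝ) 1, G u (gridCeil N v) := by
    simp only [deg, hrow]
  have hf := hG.integrableOn_comp hu measurable_id' fun _ hv => hv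
  have hg := hG.integrableOn_comp hu (measurable_gridCeil N) fun v hv => gridCeil_mem_Icc hv
  obtain ⟨j, huJ⟩ := mem_iUnion.1 (hcov hu)
  have hL1 : ∫ v in Icc (0 : ℝ) 1, |G u v - G u (gridCeil N v)| ≤ (K + n) / N := by
    simpa using integral_abs_sub_comp_gridCeil_le hN0 hK.le (hG.mem_Icc u hu) hJ hcov
      fun j' v hv v' hv' => by simpa using hLip j j' u huJ u huJ v hv v' hv'
  have hdegG : Ginf ≤ ∫ v in Icc (0 : ℝ) 1, G u v := hdeg u hu
  have hdeg_close := (abs_le.1 ((abs_integral_sub_integral_le hf hg).trans hL1)).2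
  refine ⟨?_, by rw [hdegN]; linarith⟩
  simp only [hrow, hdegN]
  calc _ ≤ 2 * (∫ v in Icc (0 : ℝ) 1, |G u v - G u (gridCeil N v)|) / ∫ v in Icc (0 : ℝ) 1, G u v :=
        integral_abs_div_integral_sub_le hf hg
          (ae_restrict_of_forall_mem measurableSet_Icc fun v hv =>
            (hG.mem_Icc u hu _ (gridCeil_mem_Icc hv)).1)
          (hGinf.trans_le hdegG)
    _ ≤ 2 * ((K + n) / N) / Ginf := by gcongr
    _ = 2 * (K + n) / Ginf / N := by ring

end
end
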